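/- Define E_{X|Y} : [0,1] → ℝ by E_{X|Y}(ρ) = log Σ_{y: P_Y(y)>0} P_Y(y) ( Σ_{x: P_{X|Y}(x|y)>0} P_{X|Y}(x|y)^{1/(1+ρ)} )^{1+ρ}. Then E_{X|Y} is three times differentiable on [0,1] and satisfies: (a) E_{X|Y}′(0) = H(P_{X|Y}|P_Y); (b) E_{X|Y}″(0) = V(P_{X|Y}|P_Y); (c) E_{X|Y}″(ρ) ≥ 0 for all ρ ∈ [0,1]; and (d) there exists a finite constant M_X > 0 such that |E_{X|Y}‴(ρ)| ≤ M_X for all ρ ∈ [0,1]. -/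

import Mathlib

/-!
Writing `P_{X|Y}(x|y) ^ t = exp (t log P_{X|Y}(x|y))`, the function
`φ_y(t) = log ∑ₓ P_{X|Y}(x|y) ^ t` is a log-sum-exp: its derivative is the mean of
`log P_{X|Y}(·|y)` under the tilted weights `P_{X|Y}(x|y) ^ t`, and its second derivative the
corresponding variance, so `φ_y'' ≥ 0`. Then `E_{X|Y}(ρ) = log ∑_y P_Y(y) exp g_y(ρ)` with
`g_y(ρ) = (1 + ρ) φ_y(1 / (1 + ρ))`, a perspective of `φ_y`, so `g_y'' = (1 + ρ)⁻³ φ_y'' ≥ 0`.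
By the same log-sum-exp computation, `E_{X|Y}''` is a tilted mean of `g_y''` plus a tilted
variance of `g_y'`, hence nonnegative. At `ρ = 0` every tilt is trivial, which gives
`H(P_{X|Y}|P_Y)` and `V(P_{X|Y}|P_Y)`. Finally `E_{X|Y}` is smooth on `ρ > -1`, so its third
derivative is continuous there and thus bounded on the compact interval `[0,1]`.
-/

open Real Filter Set

noncomputable section

namespace SWMD

variable {X Y : Type} [Fintype X] [Fintype Y]

/-- `P` is a probability mass function on `X × Y`. -/
def IsPMF2 (P : X → Y → ℝ) : Prop :=
  (∀ x y, 0 ≤ P x y) ∧ (∑ x, ∑ y, P x y) = 1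

/-- Marginal pmf of `X`. -/
def margX (P : X → Y → ℝ) (x : X) : ℝ := ∑ y, P x y

/-- Marginal pmf of `Y`. -/
def margY (P : X → Y → ℝ) (y : Y) : ℝ := ∑ x, P x y

/-- Joint entropy `H(P_XY)` (natural log, with the convention `0 log 0 = 0`,
which holds automatically since `Real.log 0 = 0`). -/
def Hjoint (P : X → Y → ℝ) : ℝ := -∑ x, ∑ y, P x y * Real.log (P x y)

/-- Entropy of the `X`-marginal, `H(P_X)`. -/
def HmargX (P : X → Y → ℝ) : ℝ := -∑ x, margX P x * Real.log (margX P x)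

/-- Entropy of the `Y`-marginal, `H(P_Y)`. -/
def HmargY (P : X → Y → ℝ) : ℝ := -∑ y, margY P y * Real.log (margY P y)

/-- Conditional entropy `H(P_{X|Y}|P_Y)`. -/
def HcondXY (P : X → Y → ℝ) : ℝ :=
  -∑ x, ∑ y, P x y * Real.log (P x y / margY P y)

/-- Conditional entropy `H(P_{Y|X}|P_X)`. -/
def HcondYX (P : X → Y → ℝ) : ℝ :=
  -∑ x, ∑ y, P x y * Real.log (P x y / margX P x)

/-- Joint varentropy `V(P_XY)`. -/
def Vjoint (P : X → Y → ℝ) : ℝ :=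
  ∑ x, ∑ y, P x y * (-Real.log (P x y) - Hjoint P) ^ 2

/-- Conditional varentropy `V(P_{X|Y}|P_Y)`. -/
def VcondXY (P : X → Y → ℝ) : ℝ :=
  ∑ x, ∑ y, P x y * (-Real.log (P x y / margY P y) - HcondXY P) ^ 2

/-- Conditional varentropy `V(P_{Y|X}|P_X)`. -/
def VcondYX (P : X → Y → ℝ) : ℝ :=
  ∑ x, ∑ y, P x y * (-Real.log (P x y / margX P x) - HcondYX P) ^ 2

open scoped Classical

/-- The Gallager-type function
`E_{X|Y}(ρ) = log Σ_{y: P_Y(y)>0} P_Y(y) (Σ_{x: P_{X|Y}(x|y)>0} P_{X|Y}(x|y)^{1/(1+ρ)})^{1+ρ}`. -/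
def ExgY (P : X → Y → ℝ) (ρ : ℝ) : ℝ :=
  Real.log (∑ y, if 0 < margY P y then
    margY P y * (∑ x, if 0 < P x y / margY P y then
      (P x y / margY P y) ^ ((1 : ℝ) / (1 + ρ)) else 0) ^ (1 + ρ)
  else 0)

end SWMD

namespace SWMD

section TiltedMean

variable {ι : Type*} (s : Finset ι) (w : ι → ℝ)

def tiltedMean (g f : ι → ℝ) : ℝ :=
  (∑ i ∈ s, w i * exp (g i) * f i) / ∑ i ∈ s, w i * exp (g i)

variable {s w}

lemma sum_mul_exp_pos (hw : ∀ i ∈ s, 0 ≤ w i) (hw₁ : 0 < ∑ i ∈ s, w i) (g : ι → ℝ) :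
    0 < ∑ i ∈ s, w i * exp (g i) := by
  obtain ⟨i, hi, hwi⟩ := Finset.exists_lt_of_sum_lt (f := fun _ => (0 : ℝ)) (by simpa using hw₁)
  exact Finset.sum_pos' (fun j hj => mul_nonneg (hw j hj) (exp_pos _).le)
    ⟨i, hi, mul_pos hwi (exp_pos _)⟩

lemma tiltedMean_of_eq_zero {g : ι → ℝ} (hg : ∀ i ∈ s, g i = 0) (f : ι → ℝ) :
    tiltedMean s w g f = (∑ i ∈ s, w i * f i) / ∑ i ∈ s, w i := by
  unfold tiltedMean
  congr 1 <;> refine Finset.sum_congr rfl fun i hi => ?_ <;> simp [hg i hi]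

lemma tiltedMean_sq_le (hw : ∀ i ∈ s, 0 ≤ w i) (g : ι → ℝ) {f f₂ : ι → ℝ}
    (hf : ∀ i ∈ s, f i ^ 2 ≤ f₂ i) : tiltedMean s w g f ^ 2 ≤ tiltedMean s w g f₂ := by
  set a := fun i => w i * exp (g i)
  have ha : ∀ i ∈ s, 0 ≤ a i := fun i hi => mul_nonneg (hw i hi) (exp_pos _).le
  have hcs : (∑ i ∈ s, a i * f i) ^ 2 ≤ (∑ i ∈ s, a i) * ∑ i ∈ s, a i * f₂ i :=
    Finset.sum_sq_le_sum_mul_sum_of_sq_le_mul s ha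
      (fun i hi => mul_nonneg (ha i hi) ((sq_nonneg _).trans (hf i hi)))
      fun i hi => by
        rw [mul_pow, sq (a i), mul_assoc]
        exact mul_le_mul_of_nonneg_left (mul_le_mul_of_nonneg_left (hf i hi) (ha i hi)) (ha i hi)
  show ((∑ i ∈ s, a i * f i) / ∑ i ∈ s, a i) ^ 2 ≤ (∑ i ∈ s, a i * f₂ i) / ∑ i ∈ s, a i
  rcases (Finset.sum_nonneg ha).eq_or_lt with hZ | hZ
  · simp [← hZ]
  · rw [div_pow, div_le_div_iff₀ (by positivity) hZ]
    nlinarith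

variable {g g' : ι → ℝ → ℝ} {ρ : ℝ}

lemma hasDerivAt_sum_mul_exp (hg : ∀ i ∈ s, HasDerivAt (g i) (g' i ρ) ρ) :
    HasDerivAt (fun ρ => ∑ i ∈ s, w i * exp (g i ρ))
      (∑ i ∈ s, w i * exp (g i ρ) * g' i ρ) ρ :=
  HasDerivAt.fun_sum fun i hi => ((hg i hi).exp.const_mul (w i)).congr_deriv (mul_assoc ..).symm

lemma hasDerivAt_log_sum_mul_exp (hg : ∀ i ∈ s, HasDerivAt (g i) (g' i ρ) ρ)
    (hZ : 0 < ∑ i ∈ s, w i * exp (g i ρ)) :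
    HasDerivAt (fun ρ => log (∑ i ∈ s, w i * exp (g i ρ))) (tiltedMean s w (g · ρ) (g' · ρ)) ρ :=
  (hasDerivAt_sum_mul_exp hg).log hZ.ne'

lemma hasDerivAt_tiltedMean {g'' : ι → ℝ} (hg : ∀ i ∈ s, HasDerivAt (g i) (g' i ρ) ρ)
    (hg' : ∀ i ∈ s, HasDerivAt (g' i) (g'' i) ρ) (hZ : 0 < ∑ i ∈ s, w i * exp (g i ρ)) :
    HasDerivAt (fun ρ => tiltedMean s w (g · ρ) (g' · ρ))
      (tiltedMean s w (g · ρ) (fun i => g'' i + g' i ρ ^ 2) -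
        tiltedMean s w (g · ρ) (g' · ρ) ^ 2) ρ := by
  have hN : HasDerivAt (fun ρ => ∑ i ∈ s, w i * exp (g i ρ) * g' i ρ)
      (∑ i ∈ s, w i * exp (g i ρ) * (g'' i + g' i ρ ^ 2)) ρ :=
    HasDerivAt.fun_sum fun i hi =>
      (((hg i hi).exp.const_mul (w i)).mul (hg' i hi)).congr_deriv (by ring)
  refine (hN.div (hasDerivAt_sum_mul_exp hg) hZ.ne').congr_deriv ?_
  unfold tiltedMean
  field_simp

lemma contDiffAt_log_sum_mul_exp {n : WithTop ℕ∞} (hg : ∀ i ∈ s, ContDiffAt ℝ n (g i) ρ)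
    (hZ : 0 < ∑ i ∈ s, w i * exp (g i ρ)) :
    ContDiffAt ℝ n (fun ρ => log (∑ i ∈ s, w i * exp (g i ρ))) ρ :=
  (ContDiffAt.sum fun i hi => contDiffAt_const.mul (hg i hi).exp).log hZ.ne'

end TiltedMean

section Perspective

/-- The perspective `(x, s) ↦ s * φ (x / s)` of `φ` at `x = 1`, `s = 1 + ρ`. -/
def perspective (φ : ℝ → ℝ) (ρ : ℝ) : ℝ := (1 + ρ) * φ (1 + ρ)⁻¹

def perspectiveDeriv (φ φ' : ℝ → ℝ) (ρ : ℝ) : ℝ := φ (1 + ρ)⁻¹ - (1 + ρ)⁻¹ * φ' (1 + ρ)⁻¹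

lemma perspective_zero (φ : ℝ → ℝ) : perspective φ 0 = φ 1 := by
  simp [perspective]

lemma perspectiveDeriv_zero (φ φ' : ℝ → ℝ) : perspectiveDeriv φ φ' 0 = φ 1 - φ' 1 := by
  simp [perspectiveDeriv]

variable {φ φ' : ℝ → ℝ} {ρ : ℝ}

lemma hasDerivAt_inv_one_add (hρ : 1 + ρ ≠ 0) :
    HasDerivAt (fun ρ => (1 + ρ)⁻¹) (-(1 + ρ)⁻¹ ^ 2) ρ :=
  (((hasDerivAt_id ρ).const_add 1).inv hρ).congr_deriv (by simp [inv_pow, neg_div])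

lemma hasDerivAt_perspective (hρ : 1 + ρ ≠ 0) (hφ : HasDerivAt φ (φ' (1 + ρ)⁻¹) (1 + ρ)⁻¹) :
    HasDerivAt (perspective φ) (perspectiveDeriv φ φ' ρ) ρ := by
  refine (((hasDerivAt_id ρ).const_add 1).mul (hφ.comp ρ (hasDerivAt_inv_one_add hρ))).congr_deriv ?_
  simp only [perspectiveDeriv, Function.comp_apply, id_eq]
  field_simp
  ring

lemma hasDerivAt_perspectiveDeriv {φ'' : ℝ → ℝ} (hρ : 1 + ρ ≠ 0)
    (hφ : HasDerivAt φ (φ' (1 + ρ)⁻¹) (1 + ρ)⁻¹) (hφ' : HasDerivAt φ' (φ'' (1 + ρ)⁻¹) (1 + ρ)⁻¹) :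
    HasDerivAt (perspectiveDeriv φ φ') ((1 + ρ)⁻¹ ^ 3 * φ'' (1 + ρ)⁻¹) ρ := by
  have ht := hasDerivAt_inv_one_add hρ
  refine ((hφ.comp ρ ht).sub (ht.mul (hφ'.comp ρ ht))).congr_deriv ?_
  simp only [Function.comp_apply]
  ring

lemma ContDiffAt.perspective {n : WithTop ℕ∞} (hρ : 1 + ρ ≠ 0) (hφ : ContDiffAt ℝ n φ (1 + ρ)⁻¹) :
    ContDiffAt ℝ n (perspective φ) ρ :=
  have hs : ContDiffAt ℝ n (fun ρ : ℝ => 1 + ρ) ρ := contDiffAt_const.add contDiffAt_id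
  hs.mul (hφ.comp ρ (hs.inv hρ))

end Perspective

lemma exists_pos_bound_deriv_deriv_deriv {f : ℝ → ℝ} {U K : Set ℝ} (hU : IsOpen U)
    (hf : ContDiffOn ℝ 3 f U) (hK : IsCompact K) (hKU : K ⊆ U) :
    ∃ M, 0 < M ∧ ∀ x ∈ K, |deriv (deriv (deriv f)) x| ≤ M := by
  have h3 : ContinuousOn (deriv (deriv (deriv f))) U :=
    ((hf.deriv_of_isOpen (m := 2) hU (by norm_num)).deriv_of_isOpen (m := 1) hU
      (by norm_num)).continuousOn_deriv_of_isOpen hU le_rfl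
  obtain ⟨C, hC⟩ := hK.exists_bound_of_continuousOn (h3.mono hKU)
  exact ⟨max C 1, lt_max_of_lt_right one_pos, fun x hx => (hC x hx).trans (le_max_left _ _)⟩

lemma ite_rpow_eq_mul_exp {p : ℝ} (hp : 0 ≤ p) (t : ℝ) :
    (if 0 < p then p ^ t else 0) = p * exp ((t - 1) * log p) := by
  split_ifs with h
  · rw [rpow_def_of_pos h, show log p * t = log p + (t - 1) * log p by ring, exp_add, exp_log h]
  · simp [le_antisymm (not_lt.1 h) hp]

variable {X Y : Type} [Fintype X]

section ConditionalPowerSum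

variable {P : X → Y → ℝ} {y : Y}

def condProb (P : X → Y → ℝ) (x : X) (y : Y) : ℝ := P x y / margY P y

/-- `t ↦ log ∑ₓ P_{X|Y}(x|y) ^ t`, each power written as `p * exp ((t - 1) * log p)` so that
`p = 0` contributes `0` without a case split. -/
def logPowSum (P : X → Y → ℝ) (y : Y) (t : ℝ) : ℝ :=
  log (∑ x, condProb P x y * exp ((t - 1) * log (condProb P x y)))

def logPowSumDeriv (P : X → Y → ℝ) (y : Y) (t : ℝ) : ℝ :=
  tiltedMean Finset.univ (condProb P · y) (fun x => (t - 1) * log (condProb P x y))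
    (fun x => log (condProb P x y))

def logPowSumDeriv2 (P : X → Y → ℝ) (y : Y) (t : ℝ) : ℝ :=
  tiltedMean Finset.univ (condProb P · y) (fun x => (t - 1) * log (condProb P x y))
    (fun x => log (condProb P x y) ^ 2) - logPowSumDeriv P y t ^ 2

lemma margY_nonneg (hP₀ : ∀ x y, 0 ≤ P x y) (y : Y) : 0 ≤ margY P y :=
  Finset.sum_nonneg fun x _ => hP₀ x y

lemma condProb_nonneg (hP₀ : ∀ x y, 0 ≤ P x y) (x : X) (y : Y) : 0 ≤ condProb P x y :=
  div_nonneg (hP₀ x y) (margY_nonneg hP₀ y)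

lemma sum_condProb (hy : 0 < margY P y) : ∑ x, condProb P x y = 1 := by
  simp only [condProb]
  rw [← Finset.sum_div]
  exact div_self hy.ne'

lemma sum_condProb_mul_exp_pos (hP₀ : ∀ x y, 0 ≤ P x y) (hy : 0 < margY P y) (g : X → ℝ) :
    0 < ∑ x, condProb P x y * exp (g x) :=
  sum_mul_exp_pos (fun x _ => condProb_nonneg hP₀ x y) (by rw [sum_condProb hy]; exact one_pos) g

lemma hasDerivAt_logPowSum (hP₀ : ∀ x y, 0 ≤ P x y) (hy : 0 < margY P y) (t : ℝ) :
    HasDerivAt (logPowSum P y) (logPowSumDeriv P y t) t :=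
  hasDerivAt_log_sum_mul_exp (g := fun x t => (t - 1) * log (condProb P x y))
    (g' := fun x _ => log (condProb P x y))
    (fun _ _ => (((hasDerivAt_id' t).sub_const 1).mul_const _).congr_deriv (one_mul _))
    (sum_condProb_mul_exp_pos hP₀ hy _)

lemma hasDerivAt_logPowSumDeriv (hP₀ : ∀ x y, 0 ≤ P x y) (hy : 0 < margY P y) (t : ℝ) :
    HasDerivAt (logPowSumDeriv P y) (logPowSumDeriv2 P y t) t := by
  refine (hasDerivAt_tiltedMean (g := fun x t => (t - 1) * log (condProb P x y))
    (g' := fun x _ => log (condProb P x y)) (g'' := 0)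
    (fun _ _ => (((hasDerivAt_id' t).sub_const 1).mul_const _).congr_deriv (one_mul _))
    (fun _ _ => hasDerivAt_const t _) (sum_condProb_mul_exp_pos hP₀ hy _)).congr_deriv ?_
  simp only [Pi.zero_apply, zero_add, logPowSumDeriv2, logPowSumDeriv]

lemma logPowSumDeriv2_nonneg (hP₀ : ∀ x y, 0 ≤ P x y) (y : Y) (t : ℝ) :
    0 ≤ logPowSumDeriv2 P y t :=
  sub_nonneg.2 (tiltedMean_sq_le (fun x _ => condProb_nonneg hP₀ x y) _ fun _ _ => le_rfl)

lemma contDiff_logPowSum (hP₀ : ∀ x y, 0 ≤ P x y) (hy : 0 < margY P y) {n : WithTop ℕ∞} :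
    ContDiff ℝ n (logPowSum P y) :=
  contDiff_iff_contDiffAt.2 fun _ =>
    contDiffAt_log_sum_mul_exp (fun _ _ => by fun_prop) (sum_condProb_mul_exp_pos hP₀ hy _)

lemma logPowSum_one (hy : 0 < margY P y) : logPowSum P y 1 = 0 := by
  simp [logPowSum, sum_condProb hy]

lemma logPowSumDeriv_one (hy : 0 < margY P y) :
    logPowSumDeriv P y 1 = ∑ x, condProb P x y * log (condProb P x y) := by
  rw [logPowSumDeriv, tiltedMean_of_eq_zero (by simp), sum_condProb hy, div_one]

lemma logPowSumDeriv2_one (hy : 0 < margY P y) :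
    logPowSumDeriv2 P y 1 = ∑ x, condProb P x y * log (condProb P x y) ^ 2 -
      (∑ x, condProb P x y * log (condProb P x y)) ^ 2 := by
  rw [logPowSumDeriv2, logPowSumDeriv_one hy, tiltedMean_of_eq_zero (by simp), sum_condProb hy,
    div_one]

lemma sum_ite_rpow_condProb (hP₀ : ∀ x y, 0 ≤ P x y) (hy : 0 < margY P y) (t : ℝ) :
    (∑ x, if 0 < P x y / margY P y then (P x y / margY P y) ^ t else 0) =
      exp (logPowSum P y t) := by
  rw [logPowSum, exp_log (sum_condProb_mul_exp_pos hP₀ hy _)]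
  exact Finset.sum_congr rfl fun x _ => ite_rpow_eq_mul_exp (condProb_nonneg hP₀ x y) t

lemma perspective_logPowSum_zero (hy : 0 < margY P y) : perspective (logPowSum P y) 0 = 0 := by
  rw [perspective_zero, logPowSum_one hy]

lemma perspectiveDeriv_logPowSum_zero (hy : 0 < margY P y) :
    perspectiveDeriv (logPowSum P y) (logPowSumDeriv P y) 0 =
      -∑ x, condProb P x y * log (condProb P x y) := by
  rw [perspectiveDeriv_zero, logPowSum_one hy, logPowSumDeriv_one hy, zero_sub]

end ConditionalPowerSum

variable [Fintype Y]

section Exponent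

variable {P : X → Y → ℝ}

def supportY (P : X → Y → ℝ) : Finset Y := Finset.univ.filter fun y => 0 < margY P y

lemma pos_of_mem_supportY {y : Y} (hy : y ∈ supportY P) : 0 < margY P y :=
  (Finset.mem_filter.1 hy).2

lemma sum_supportY_margY (hP : IsPMF2 P) : ∑ y ∈ supportY P, margY P y = 1 := by
  rw [supportY, Finset.sum_filter_of_ne fun y _ hy => (margY_nonneg hP.1 y).lt_of_ne' hy]
  simp only [margY]
  rw [Finset.sum_comm]
  exact hP.2

lemma sum_supportY_mul_exp_pos (hP : IsPMF2 P) (g : Y → ℝ) :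
    0 < ∑ y ∈ supportY P, margY P y * exp (g y) :=
  sum_mul_exp_pos (fun y _ => margY_nonneg hP.1 y) (by rw [sum_supportY_margY hP]; exact one_pos) g

lemma sum_supportY_margY_mul_sum_condProb (hP₀ : ∀ x y, 0 ≤ P x y) (f : X → Y → ℝ) :
    ∑ y ∈ supportY P, margY P y * ∑ x, condProb P x y * f x y = ∑ x, ∑ y, P x y * f x y := by
  rw [Finset.sum_comm (s := Finset.univ), supportY, Finset.sum_filter]
  refine Finset.sum_congr rfl fun y _ => ?_
  split_ifs with hy
  · rw [Finset.mul_sum]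
    refine Finset.sum_congr rfl fun x _ => ?_
    rw [condProb, ← mul_assoc, mul_div_cancel₀ _ hy.ne']
  · have hzero : margY P y = 0 := le_antisymm (not_lt.1 hy) (margY_nonneg hP₀ y)
    have hPy : ∀ x, P x y = 0 := fun x =>
      (Finset.sum_eq_zero_iff_of_nonneg fun x _ => hP₀ x y).1 hzero x (Finset.mem_univ x)
    simp [hPy]

lemma VcondXY_eq (hP : IsPMF2 P) :
    VcondXY P = ∑ x, ∑ y, P x y * log (condProb P x y) ^ 2 - HcondXY P ^ 2 := by
  have hH : ∑ x, ∑ y, P x y * log (condProb P x y) = -HcondXY P := by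
    rw [HcondXY, neg_neg]
    rfl
  have hsq : ∀ x y, P x y * (-log (P x y / margY P y) - HcondXY P) ^ 2 =
      P x y * log (condProb P x y) ^ 2 + 2 * HcondXY P * (P x y * log (condProb P x y)) +
        HcondXY P ^ 2 * P x y := fun x y => by
    rw [condProb]
    ring
  simp only [VcondXY, hsq, Finset.sum_add_distrib, ← Finset.mul_sum, hH, hP.2]
  ring

lemma ExgY_eq_log_sum_exp_perspective (hP₀ : ∀ x y, 0 ≤ P x y) :
    ExgY P = fun ρ => log (∑ y ∈ supportY P, margY P y * exp (perspective (logPowSum P y) ρ)) := by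
  funext ρ
  rw [ExgY, ← Finset.sum_filter]
  refine congrArg log (Finset.sum_congr rfl fun y hy => ?_)
  rw [sum_ite_rpow_condProb hP₀ (pos_of_mem_supportY hy), one_div, ← exp_mul, perspective,
    mul_comm (1 + ρ)]

def ExgYDeriv (P : X → Y → ℝ) (ρ : ℝ) : ℝ :=
  tiltedMean (supportY P) (margY P) (fun y => perspective (logPowSum P y) ρ)
    (fun y => perspectiveDeriv (logPowSum P y) (logPowSumDeriv P y) ρ)

def ExgYDeriv2 (P : X → Y → ℝ) (ρ : ℝ) : ℝ :=
  tiltedMean (supportY P) (margY P) (fun y => perspective (logPowSum P y) ρ)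
    (fun y => (1 + ρ)⁻¹ ^ 3 * logPowSumDeriv2 P y (1 + ρ)⁻¹ +
      perspectiveDeriv (logPowSum P y) (logPowSumDeriv P y) ρ ^ 2) - ExgYDeriv P ρ ^ 2

variable {ρ : ℝ}

lemma hasDerivAt_ExgY (hP : IsPMF2 P) (hρ : -1 < ρ) : HasDerivAt (ExgY P) (ExgYDeriv P ρ) ρ := by
  rw [ExgY_eq_log_sum_exp_perspective hP.1]
  exact hasDerivAt_log_sum_mul_exp (fun y hy => hasDerivAt_perspective (by linarith)
    (hasDerivAt_logPowSum hP.1 (pos_of_mem_supportY hy) _)) (sum_supportY_mul_exp_pos hP _)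

lemma hasDerivAt_ExgYDeriv (hP : IsPMF2 P) (hρ : -1 < ρ) :
    HasDerivAt (ExgYDeriv P) (ExgYDeriv2 P ρ) ρ :=
  have hρ' : 1 + ρ ≠ 0 := by linarith
  hasDerivAt_tiltedMean
    (fun y hy => hasDerivAt_perspective hρ' (hasDerivAt_logPowSum hP.1 (pos_of_mem_supportY hy) _))
    (fun y hy => hasDerivAt_perspectiveDeriv hρ'
      (hasDerivAt_logPowSum hP.1 (pos_of_mem_supportY hy) _)
      (hasDerivAt_logPowSumDeriv hP.1 (pos_of_mem_supportY hy) _))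
    (sum_supportY_mul_exp_pos hP _)

lemma deriv_ExgY (hP : IsPMF2 P) (hρ : -1 < ρ) : deriv (ExgY P) ρ = ExgYDeriv P ρ :=
  (hasDerivAt_ExgY hP hρ).deriv

lemma deriv_deriv_ExgY (hP : IsPMF2 P) (hρ : -1 < ρ) :
    deriv (deriv (ExgY P)) ρ = ExgYDeriv2 P ρ := by
  have h : deriv (ExgY P) =ᶠ[nhds ρ] ExgYDeriv P :=
    Filter.eventually_of_mem (isOpen_Ioi.mem_nhds hρ) fun _ h => deriv_ExgY hP h
  rw [h.deriv_eq, (hasDerivAt_ExgYDeriv hP hρ).deriv]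

lemma ExgYDeriv2_nonneg (hP₀ : ∀ x y, 0 ≤ P x y) (hρ : -1 < ρ) : 0 ≤ ExgYDeriv2 P ρ :=
  sub_nonneg.2 <| tiltedMean_sq_le (fun y _ => margY_nonneg hP₀ y) _ fun y _ =>
    le_add_of_nonneg_left <| mul_nonneg (pow_nonneg (inv_pos.2 (by linarith)).le 3)
      (logPowSumDeriv2_nonneg hP₀ y _)

lemma contDiffOn_ExgY (hP : IsPMF2 P) : ContDiffOn ℝ 3 (ExgY P) (Ioi (-1)) := by
  rw [ExgY_eq_log_sum_exp_perspective hP.1]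
  exact fun ρ hρ => (contDiffAt_log_sum_mul_exp (fun y hy =>
    ContDiffAt.perspective (by linarith [mem_Ioi.1 hρ])
      (contDiff_logPowSum hP.1 (pos_of_mem_supportY hy)).contDiffAt)
    (sum_supportY_mul_exp_pos hP _)).contDiffWithinAt

lemma tiltedMean_supportY_zero (hP : IsPMF2 P) (f : Y → ℝ) :
    tiltedMean (supportY P) (margY P) (fun y => perspective (logPowSum P y) 0) f =
      ∑ y ∈ supportY P, margY P y * f y := by
  rw [tiltedMean_of_eq_zero fun y hy => perspective_logPowSum_zero (pos_of_mem_supportY hy),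
    sum_supportY_margY hP, div_one]

lemma ExgYDeriv_zero (hP : IsPMF2 P) : ExgYDeriv P 0 = HcondXY P := by
  rw [ExgYDeriv, tiltedMean_supportY_zero hP]
  calc _ = ∑ y ∈ supportY P, margY P y * ∑ x, condProb P x y * -log (condProb P x y) :=
        Finset.sum_congr rfl fun y hy => by
          simp only [perspectiveDeriv_logPowSum_zero (pos_of_mem_supportY hy), mul_neg,
            Finset.sum_neg_distrib]
    _ = HcondXY P := by
      rw [sum_supportY_margY_mul_sum_condProb hP.1]
      simp only [HcondXY, mul_neg, Finset.sum_neg_distrib]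
      rfl

lemma ExgYDeriv2_zero (hP : IsPMF2 P) : ExgYDeriv2 P 0 = VcondXY P := by
  rw [ExgYDeriv2, ExgYDeriv_zero hP, tiltedMean_supportY_zero hP, VcondXY_eq hP,
    ← sum_supportY_margY_mul_sum_condProb hP.1]
  congr 1
  refine Finset.sum_congr rfl fun y hy => ?_
  rw [perspectiveDeriv_logPowSum_zero (pos_of_mem_supportY hy), add_zero, inv_one,
    logPowSumDeriv2_one (pos_of_mem_supportY hy)]
  ring

end Exponent

theorem ExgY_derivatives_general
    (P : X → Y → ℝ) (hP : IsPMF2 P) :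
    (∀ ρ ∈ Set.Icc (0:ℝ) 1, ContDiffAt ℝ 3 (ExgY P) ρ) ∧
    deriv (ExgY P) 0 = HcondXY P ∧
    deriv (deriv (ExgY P)) 0 = VcondXY P ∧
    (∀ ρ ∈ Set.Icc (0:ℝ) 1, 0 ≤ deriv (deriv (ExgY P)) ρ) ∧
    (∃ M : ℝ, 0 < M ∧ ∀ ρ ∈ Set.Icc (0:ℝ) 1,
      |deriv (deriv (deriv (ExgY P))) ρ| ≤ M) := by
  have hIcc : Icc (0 : ℝ) 1 ⊆ Ioi (-1) := fun ρ hρ => mem_Ioi.2 (by linarith [hρ.1])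
  refine ⟨fun ρ hρ => (contDiffOn_ExgY hP).contDiffAt (isOpen_Ioi.mem_nhds (hIcc hρ)), ?_, ?_,
    fun ρ hρ => ?_, exists_pos_bound_deriv_deriv_deriv isOpen_Ioi (contDiffOn_ExgY hP)
      isCompact_Icc hIcc⟩
  · rw [deriv_ExgY hP (by norm_num), ExgYDeriv_zero hP]
  · rw [deriv_deriv_ExgY hP (by norm_num), ExgYDeriv2_zero hP]
  · rw [deriv_deriv_ExgY hP (hIcc hρ)]
    exact ExgYDeriv2_nonneg hP.1 (hIcc hρ)

/-- **Lemma 2**: `E_{X|Y}` is three times differentiable on `[0,1]`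
(derivatives at the endpoints being one-sided, i.e. taken for the globally
defined function given by the same formula), with
`E_{X|Y}′(0) = H(P_{X|Y}|P_Y)`, `E_{X|Y}″(0) = V(P_{X|Y}|P_Y)`,
`E_{X|Y}″ ≥ 0` on `[0,1]`, and a finite positive bound `M_X` on `|E_{X|Y}‴|`
over `[0,1]`. -/
theorem ExgY_derivatives [Nonempty X] [Nonempty Y]
    (P : X → Y → ℝ) (hP : IsPMF2 P) :
    (∀ ρ ∈ Set.Icc (0:ℝ) 1, ContDiffAt ℝ 3 (ExgY P) ρ) ∧
    deriv (ExgY P) 0 = HcondXY P ∧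
    deriv (deriv (ExgY P)) 0 = VcondXY P ∧
    (∀ ρ ∈ Set.Icc (0:ℝ) 1, 0 ≤ deriv (deriv (ExgY P)) ρ) ∧
    (∃ M : ℝ, 0 < M ∧ ∀ ρ ∈ Set.Icc (0:ℝ) 1,
      |deriv (deriv (deriv (ExgY P))) ρ| ≤ M) :=
  ExgY_derivatives_general P hP

end SWMD
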